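/- Let f: R^d → R be self-concordant with minimizer x_* and H_* = ∇²f(x_*), and write H_x = ∇²f(x). If ‖x − x_*‖_* < 1, then ‖H_x − H_*‖²_{F(H_*⁻¹)} ≤ d · ‖x − x_*‖_*² · ((2 − ‖x − x_*‖_*)/(1 − ‖x − x_*‖_*)²)². -/

import Mathlib

open Matrix MeasureTheory Filter
open scoped Classical

noncomputable section

/-- Vectors in `ℝ^d` with the Euclidean (2-)norm. -/
abbrev Vec (d : ℕ) := EuclideanSpace ℝ (Fin d)

/-- Matrix square root of a positive semidefinite matrix (junk value `0` otherwise). -/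
noncomputable def msqrt {d : ℕ} (M : Matrix (Fin d) (Fin d) ℝ) : Matrix (Fin d) (Fin d) ℝ :=
  if h : M.PosSemidef then
    h.1.eigenvectorUnitary.1 * diagonal ((RCLike.ofReal (K := ℝ)) ∘ Real.sqrt ∘ h.1.eigenvalues) *
      (star h.1.eigenvectorUnitary : Matrix (Fin d) (Fin d) ℝ)
  else 0

/-- Frobenius norm of a square matrix. -/
noncomputable def frobNorm {d : ℕ} (M : Matrix (Fin d) (Fin d) ℝ) : ℝ :=
  Real.sqrt (Matrix.trace (Mᵀ * M))

/-- Weighted Frobenius norm `‖W‖_{F(H)} = ‖H^{1/2} W H^{1/2}‖_F`. -/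
noncomputable def wFrob {d : ℕ} (H W : Matrix (Fin d) (Fin d) ℝ) : ℝ :=
  frobNorm (msqrt H * W * msqrt H)

/-- Local norm `‖v‖_H = √⟨H v, v⟩`. -/
noncomputable def localNorm {d : ℕ} (H : Matrix (Fin d) (Fin d) ℝ) (v : Vec d) : ℝ :=
  Real.sqrt (inner ℝ (Matrix.toEuclideanLin H v) v : ℝ)

/-- `f` is self-concordant, expressed through its Hessian map `Hf`:
the Hessian is everywhere positive definite and the local norms at nearby points are
comparable. -/
def SelfConcordant {d : ℕ} (Hf : Vec d → Matrix (Fin d) (Fin d) ℝ) : Prop :=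
  (∀ x, (Hf x).PosDef) ∧
  ∀ x y v : Vec d, localNorm (Hf x) (y - x) < 1 → v ≠ 0 →
    1 - localNorm (Hf x) (y - x) ≤ localNorm (Hf y) v / localNorm (Hf x) v ∧
      localNorm (Hf y) v / localNorm (Hf x) v ≤ 1 / (1 - localNorm (Hf x) (y - x))

/-- `g` is the gradient of `f` and `Hf` is its Hessian (the derivative of the gradient). -/
def IsGradHess {d : ℕ} (f : Vec d → ℝ) (g : Vec d → Vec d)
    (Hf : Vec d → Matrix (Fin d) (Fin d) ℝ) : Prop :=
  (∀ x, HasGradientAt f (g x) x) ∧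
  ∀ x, HasFDerivAt g (Matrix.toEuclideanCLM (𝕜 := ℝ) (Hf x) : Vec d →L[ℝ] Vec d) x

/-- Smallest eigenvalue of a symmetric matrix, via the Rayleigh quotient. -/
noncomputable def lambdaMin {d : ℕ} (M : Matrix (Fin d) (Fin d) ℝ) : ℝ :=
  ⨅ v : {v : Vec d // ‖v‖ = 1}, (inner ℝ (Matrix.toEuclideanLin M v.1) v.1 : ℝ)

/-- Entrywise expectation of a random matrix. -/
noncomputable def expMat {Ω : Type*} [MeasurableSpace Ω] (μ : Measure Ω)
    {m n : ℕ} (M : Ω → Matrix (Fin m) (Fin n) ℝ) : Matrix (Fin m) (Fin n) ℝ :=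
  Matrix.of fun i j => ∫ ω, M ω i j ∂μ

/-- The projection matrix `Z = H^{1/2} S (Sᵀ H S)⁻¹ Sᵀ H^{1/2}`. -/
noncomputable def sketchProj {d τ : ℕ} (H : Matrix (Fin d) (Fin d) ℝ)
    (S : Matrix (Fin d) (Fin τ) ℝ) : Matrix (Fin d) (Fin d) ℝ :=
  msqrt H * S * (Sᵀ * H * S)⁻¹ * Sᵀ * msqrt H

/-- The (randomized) BFGS update
`BFGS(B, H, S) = G + (I - G H) B (I - H G)` with `G = S (Sᵀ H S)⁻¹ Sᵀ`. -/
noncomputable def bfgsUpdate {d τ : ℕ} (B H : Matrix (Fin d) (Fin d) ℝ)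
    (S : Matrix (Fin d) (Fin τ) ℝ) : Matrix (Fin d) (Fin d) ℝ :=
  S * (Sᵀ * H * S)⁻¹ * Sᵀ +
    (1 - S * (Sᵀ * H * S)⁻¹ * Sᵀ * H) * B * (1 - H * (S * (Sᵀ * H * S)⁻¹ * Sᵀ))

/-- Spectral (operator 2-)norm of a matrix. -/
noncomputable def opNorm2 {d : ℕ} (M : Matrix (Fin d) (Fin d) ℝ) : ℝ :=
  ‖(Matrix.toEuclideanCLM (𝕜 := ℝ) M : Vec d →L[ℝ] Vec d)‖

instance matrixMeasurableSpace {m n : Type*} : MeasurableSpace (Matrix m n ℝ) :=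
  MeasurableSpace.pi

/-- The sketching matrices `S k` are i.i.d. samples from a common distribution `D`. -/
def IIDSketch {d τ : ℕ} {Ω : Type*} [MeasurableSpace Ω] (μ : Measure Ω)
    (S : ℕ → Ω → Matrix (Fin d) (Fin τ) ℝ) : Prop :=
  (∀ k, Measurable (S k)) ∧
  ProbabilityTheory.iIndepFun (m := fun _ => matrixMeasurableSpace) S μ ∧
  ∀ k, Measure.map (S k) μ = Measure.map (S 0) μ

end

/-!
With `r = ‖x - x_*‖_* < 1`, self-concordance sandwiches the Hessians,
`(1 - r)² H_* ≤ H_x ≤ H_* / (1 - r)²`, so `|⟨(H_x - H_*) v, v⟩| ≤ c ⟨H_* v, v⟩` with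
`c = r (2 - r) / (1 - r)²`. Conjugating by `H_*^{-1/2}` turns this into `|⟨A w, w⟩| ≤ c ‖w‖²`
for the symmetric matrix `A = H_*^{-1/2} (H_x - H_*) H_*^{-1/2}`, whose eigenvalues therefore lie in
`[-c, c]`; hence `‖A‖_F² = ∑ λᵢ² ≤ d c²`.
-/

open scoped MatrixOrder

lemma abs_sq_sub_one_le {q r : ℝ} (hr0 : 0 ≤ r) (hr1 : r < 1) (hlo : 1 - r ≤ q)
    (hhi : q ≤ 1 / (1 - r)) : |q ^ 2 - 1| ≤ r * (2 - r) / (1 - r) ^ 2 := by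
  have hs : 0 < 1 - r := by linarith
  have hq : q ^ 2 ≤ 1 / (1 - r) ^ 2 := by
    rw [← _root_.one_div_pow]; exact pow_le_pow_left₀ (by linarith) hhi 2
  have hlo2 : (1 - r) ^ 2 ≤ q ^ 2 := pow_le_pow_left₀ hs.le hlo 2
  have hdiv : r * (2 - r) ≤ r * (2 - r) / (1 - r) ^ 2 :=
    le_div_self (by nlinarith) (by positivity) (by nlinarith)
  rw [abs_le]
  constructor
  · nlinarith
  · calc q ^ 2 - 1 ≤ 1 / (1 - r) ^ 2 - 1 := by linarith
      _ = r * (2 - r) / (1 - r) ^ 2 := by field_simp; ring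

lemma localNorm_nonneg {d : ℕ} (H : Matrix (Fin d) (Fin d) ℝ) (v : Vec d) : 0 ≤ localNorm H v :=
  Real.sqrt_nonneg _

lemma localNorm_sq {d : ℕ} {H : Matrix (Fin d) (Fin d) ℝ} (hH : H.PosSemidef) (v : Fin d → ℝ) :
    localNorm H (WithLp.toLp 2 v) ^ 2 = v ⬝ᵥ H *ᵥ v := by
  rw [show localNorm H (WithLp.toLp 2 v) = √(v ⬝ᵥ H *ᵥ v) from rfl, Real.sq_sqrt]
  simpa using hH.dotProduct_mulVec_nonneg v

lemma SelfConcordant.abs_dotProduct_sub_le {d : ℕ} {Hf : Vec d → Matrix (Fin d) (Fin d) ℝ}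
    (hsc : SelfConcordant Hf) {x y : Vec d} (hxy : localNorm (Hf x) (y - x) < 1) (v : Fin d → ℝ) :
    |v ⬝ᵥ (Hf y - Hf x) *ᵥ v| ≤
      localNorm (Hf x) (y - x) * (2 - localNorm (Hf x) (y - x)) /
        (1 - localNorm (Hf x) (y - x)) ^ 2 * (v ⬝ᵥ Hf x *ᵥ v) := by
  rcases eq_or_ne v 0 with rfl | hv
  · simp
  obtain ⟨hlo, hhi⟩ := hsc.2 x y _ hxy (by simpa using hv : WithLp.toLp 2 v ≠ 0)
  have hq := abs_sq_sub_one_le (localNorm_nonneg _ _) hxy hlo hhi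
  rw [sub_mulVec, dotProduct_sub, ← localNorm_sq (hsc.1 y).posSemidef,
    ← localNorm_sq (hsc.1 x).posSemidef]
  set a := localNorm (Hf y) (WithLp.toLp 2 v)
  set b := localNorm (Hf x) (WithLp.toLp 2 v)
  have hb : 0 < b ^ 2 := by
    rw [localNorm_sq (hsc.1 x).posSemidef]; exact (hsc.1 x).dotProduct_mulVec_pos hv
  calc |a ^ 2 - b ^ 2| = |(a / b) ^ 2 - 1| * b ^ 2 := by
        rw [← abs_of_pos hb, ← abs_mul, abs_of_pos hb, div_pow, sub_mul, div_mul_cancel₀ _ hb.ne',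
          one_mul]
    _ ≤ _ := mul_le_mul_of_nonneg_right hq hb.le

section

variable {n : Type*} [Fintype n]

lemma Matrix.IsHermitian.dotProduct_mul_mul_mulVec {R : Matrix n n ℝ} (hR : R.IsHermitian)
    (B : Matrix n n ℝ) (w : n → ℝ) : w ⬝ᵥ (R * B * R) *ᵥ w = (R *ᵥ w) ⬝ᵥ B *ᵥ (R *ᵥ w) := by
  rw [← mulVec_mulVec, ← mulVec_mulVec, dotProduct_mulVec, ← mulVec_transpose,
    ← conjTranspose_eq_transpose_of_trivial, hR.eq]

variable [DecidableEq n] {A : Matrix n n ℝ}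

lemma Matrix.IsHermitian.trace_transpose_mul_self (hA : A.IsHermitian) :
    trace (Aᵀ * A) = ∑ i, hA.eigenvalues i ^ 2 := by
  set U : Matrix n n ℝ := hA.eigenvectorUnitary.1
  set D : Matrix n n ℝ := diagonal (RCLike.ofReal ∘ hA.eigenvalues)
  have hUU : star U * U = 1 := Unitary.coe_star_mul_self _
  have hspec : A = U * D * star U := by
    conv_lhs => rw [hA.spectral_theorem, Unitary.conjStarAlgAut_apply]
  calc trace (Aᵀ * A) = trace (A * A) := by
        rw [← conjTranspose_eq_transpose_of_trivial, hA.eq]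
    _ = trace (U * (D * (star U * U) * D) * star U) := by rw [hspec]; noncomm_ring
    _ = trace (D * D) := by rw [hUU, mul_one, trace_mul_cycle, ← mul_assoc, hUU, one_mul]
    _ = ∑ i, hA.eigenvalues i ^ 2 := by simp [D, sq]

lemma Matrix.IsHermitian.abs_eigenvalues_le (hA : A.IsHermitian) {c : ℝ}
    (h : ∀ w, |w ⬝ᵥ A *ᵥ w| ≤ c * (w ⬝ᵥ w)) (i : n) : |hA.eigenvalues i| ≤ c := by
  set v := hA.eigenvectorBasis i
  have hv : ⇑v ⬝ᵥ ⇑v = 1 := by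
    have := real_inner_self_eq_norm_sq v
    rw [hA.eigenvectorBasis.orthonormal.1 i, one_pow,
      EuclideanSpace.inner_eq_star_dotProduct] at this
    simpa using this
  simpa [hA.eigenvalues_eq i, hv] using h v

lemma Matrix.IsHermitian.trace_transpose_mul_self_le (hA : A.IsHermitian) {c : ℝ}
    (h : ∀ w, |w ⬝ᵥ A *ᵥ w| ≤ c * (w ⬝ᵥ w)) : trace (Aᵀ * A) ≤ Fintype.card n * c ^ 2 := by
  rw [hA.trace_transpose_mul_self, ← nsmul_eq_mul, ← Finset.card_univ, ← Finset.sum_const]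
  refine Finset.sum_le_sum fun i _ => ?_
  rw [← sq_abs]
  exact pow_le_pow_left₀ (abs_nonneg _) (hA.abs_eigenvalues_le h i) 2

lemma Matrix.PosDef.sqrt_inv_mul_self_mul_sqrt_inv {H : Matrix n n ℝ} (hH : H.PosDef) :
    CFC.sqrt H⁻¹ * H * CFC.sqrt H⁻¹ = 1 := by
  rw [← hH.posSemidef.inv_sqrt]
  set S := CFC.sqrt H
  have hS : IsUnit S := (CFC.isUnit_sqrt_iff H hH.posSemidef.nonneg).2 hH.isUnit
  have hdet : IsUnit S.det := (Matrix.isUnit_iff_isUnit_det S).1 hS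
  conv_lhs => rw [← CFC.sqrt_mul_sqrt_self H hH.posSemidef.nonneg]
  rw [← mul_assoc, nonsing_inv_mul _ hdet, one_mul, mul_nonsing_inv _ hdet]

end

lemma msqrt_eq_sqrt {d : ℕ} {M : Matrix (Fin d) (Fin d) ℝ} (hM : M.PosSemidef) :
    msqrt M = CFC.sqrt M := by
  rw [msqrt, dif_pos hM, CFC.sqrt_eq_real_sqrt M hM.nonneg, cfcₙ_eq_cfc, hM.1.cfc_eq,
    IsHermitian.cfc, Unitary.conjStarAlgAut_apply]

lemma wFrob_inv_sq_le {d : ℕ} {H B : Matrix (Fin d) (Fin d) ℝ} (hH : H.PosDef)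
    (hB : B.IsHermitian) {c : ℝ} (h : ∀ v, |v ⬝ᵥ B *ᵥ v| ≤ c * (v ⬝ᵥ H *ᵥ v)) :
    wFrob H⁻¹ B ^ 2 ≤ d * c ^ 2 := by
  set R := CFC.sqrt H⁻¹
  have hR : R.IsHermitian := (CFC.sqrt_nonneg _).posSemidef.isHermitian
  have hA : (R * B * R).IsHermitian := by
    simpa only [hR.eq] using isHermitian_conjTranspose_mul_mul R hB
  have hquad : ∀ w, |w ⬝ᵥ (R * B * R) *ᵥ w| ≤ c * (w ⬝ᵥ w) := fun w => by
    have := h (R *ᵥ w)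
    rwa [← hR.dotProduct_mul_mul_mulVec, ← hR.dotProduct_mul_mul_mulVec,
      hH.sqrt_inv_mul_self_mul_sqrt_inv, one_mulVec] at this
  have htrace : 0 ≤ trace ((R * B * R)ᵀ * (R * B * R)) := by
    simpa only [conjTranspose_eq_transpose_of_trivial]
      using (posSemidef_conjTranspose_mul_self (R * B * R)).trace_nonneg
  rw [wFrob, frobNorm, msqrt_eq_sqrt hH.inv.posSemidef, Real.sq_sqrt htrace]
  simpa using hA.trace_transpose_mul_self_le hquad

theorem hessian_distance_bound_self_concordant_general
    {d : ℕ} (Hf : Vec d → Matrix (Fin d) (Fin d) ℝ)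
    (hsc : SelfConcordant Hf)
    (xstar : Vec d)
    (x : Vec d) (hx : localNorm (Hf xstar) (x - xstar) < 1) :
    wFrob (Hf xstar)⁻¹ (Hf x - Hf xstar) ^ 2 ≤
      d * localNorm (Hf xstar) (x - xstar) ^ 2 *
        ((2 - localNorm (Hf xstar) (x - xstar)) /
          (1 - localNorm (Hf xstar) (x - xstar)) ^ 2) ^ 2 := by
  calc wFrob (Hf xstar)⁻¹ (Hf x - Hf xstar) ^ 2
      ≤ d * (localNorm (Hf xstar) (x - xstar) * (2 - localNorm (Hf xstar) (x - xstar)) /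
          (1 - localNorm (Hf xstar) (x - xstar)) ^ 2) ^ 2 :=
        wFrob_inv_sq_le (hsc.1 xstar) ((hsc.1 x).1.sub (hsc.1 xstar).1)
          (hsc.abs_dotProduct_sub_le hx)
    _ = _ := by ring

/-- **Hessian distance bound in the `F(H_*⁻¹)` norm for self-concordant `f`.** -/
theorem hessian_distance_bound_self_concordant
    {d : ℕ} (f : Vec d → ℝ) (g : Vec d → Vec d) (Hf : Vec d → Matrix (Fin d) (Fin d) ℝ)
    (hfgH : IsGradHess f g Hf) (hsc : SelfConcordant Hf)
    (xstar : Vec d) (hmin : ∀ y, f xstar ≤ f y)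
    (x : Vec d) (hx : localNorm (Hf xstar) (x - xstar) < 1) :
    wFrob (Hf xstar)⁻¹ (Hf x - Hf xstar) ^ 2 ≤
      d * localNorm (Hf xstar) (x - xstar) ^ 2 *
        ((2 - localNorm (Hf xstar) (x - xstar)) /
          (1 - localNorm (Hf xstar) (x - xstar)) ^ 2) ^ 2 :=
  hessian_distance_bound_self_concordant_general Hf hsc xstar x hx
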